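/- Let (M,g) be a compact Riemannian manifold of dimension n ≥ 3 satisfying for some C > 0 and all σ > 0 the logarithmic Sobolev inequality ∫_M u² ln u² dvol ≤ (σ/4)∫_M(4|∇u|² + Ru²)dvol - (n/2)ln σ + C for all u with ∫u² = 1. Then vol(M) ≥ e^{-1/4 - C} if the average scalar curvature R̂ = (∫R dvol)/vol(M) satisfies R̂ ≤ 0, and vol(M) ≥ e^{-1/4 - C} R̂^{-n/2} if R̂ > 0. -/

import Mathlib

/-!
Test the logarithmic Sobolev inequality with the constant function `u = vol(M)^{-1/2}`: its
gradient vanishes, so it gives `-log vol(M) ≤ (σ/4) R̂ - (n/2) log σ + C` for every `σ > 0`.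
Taking `σ = 1` when `R̂ ≤ 0` and `σ = R̂⁻¹` when `R̂ > 0` yields the two bounds.
-/

open MeasureTheory Real

theorem Real.rpow_neg_half_sq {x : ℝ} (hx : 0 ≤ x) : (x ^ (-(1 : ℝ) / 2)) ^ 2 = x⁻¹ := by
  rw [← rpow_natCast, ← rpow_mul hx]
  norm_num [rpow_neg_one]

section NormalizedConstant

variable {M : Type*} [MeasurableSpace M] (μ : Measure M) {c : ℝ}

theorem integral_sq_const_of_sq_eq_inv (hμ : 0 < μ.real Set.univ)
    (hc : c ^ 2 = (μ.real Set.univ)⁻¹) :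
    ∫ _ : M, c ^ 2 ∂μ = 1 := by
  rw [integral_const, smul_eq_mul, hc, mul_inv_cancel₀ hμ.ne']

theorem integral_sq_mul_log_sq_const_of_sq_eq_inv (hμ : 0 < μ.real Set.univ)
    (hc : c ^ 2 = (μ.real Set.univ)⁻¹) :
    ∫ _ : M, c ^ 2 * log (c ^ 2) ∂μ = -log (μ.real Set.univ) := by
  rw [integral_const, smul_eq_mul, hc, log_inv, ← mul_assoc, mul_inv_cancel₀ hμ.ne', one_mul]

theorem integral_mul_sq_const_of_sq_eq_inv (R : M → ℝ) (hc : c ^ 2 = (μ.real Set.univ)⁻¹) :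
    ∫ x, R x * c ^ 2 ∂μ = (∫ x, R x ∂μ) / μ.real Set.univ := by
  rw [integral_mul_const, hc, div_eq_mul_inv]

end NormalizedConstant

section OptimizeScale

variable {V r a C : ℝ}

theorem exp_neg_quarter_sub_le_of_nonpos (hV : 0 < V)
    (h : ∀ σ : ℝ, 0 < σ → -log V ≤ σ / 4 * r - a * log σ + C) (hr : r ≤ 0) :
    exp (-(1 / 4) - C) ≤ V := by
  have h₁ := h 1 one_pos
  rw [log_one, mul_zero, sub_zero] at h₁
  rw [← le_log_iff_exp_le hV]
  linarith

theorem exp_neg_quarter_sub_mul_rpow_neg_le_of_pos (hV : 0 < V)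
    (h : ∀ σ : ℝ, 0 < σ → -log V ≤ σ / 4 * r - a * log σ + C) (hr : 0 < r) :
    exp (-(1 / 4) - C) * r ^ (-a) ≤ V := by
  have hinv := h r⁻¹ (inv_pos.mpr hr)
  rw [div_mul_eq_mul_div, inv_mul_cancel₀ hr.ne', log_inv] at hinv
  rw [rpow_def_of_pos hr, ← exp_add, ← le_log_iff_exp_le hV]
  linarith

end OptimizeScale

theorem volume_bound_of_LSI_general
    {M : Type*} [MeasurableSpace M] (vol : Measure M)
    (n : ℕ)
    (W12 : Set (M → ℝ)) (grad : (M → ℝ) → (M → ℝ)) (R : M → ℝ)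
    (hvol : 0 < (vol Set.univ).toReal)
    (C : ℝ)
    (hLSI : ∀ σ : ℝ, 0 < σ → ∀ u ∈ W12, (∫ x, (u x) ^ 2 ∂vol) = 1 →
      (∫ x, (u x) ^ 2 * Real.log ((u x) ^ 2) ∂vol) ≤
        σ / 4 * (∫ x, (4 * (grad u x) ^ 2 + R x * (u x) ^ 2) ∂vol) -
          n / 2 * Real.log σ + C)
    -- the constant function `vol(M)^{-1/2}` is an admissible test function
    (hconst : (fun _ : M => (vol Set.univ).toReal ^ (-(1 : ℝ) / 2)) ∈ W12)
    (hgradconst : ∀ x, grad (fun _ : M => (vol Set.univ).toReal ^ (-(1 : ℝ) / 2)) x = 0) :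
    ((∫ x, R x ∂vol) / (vol Set.univ).toReal ≤ 0 →
        Real.exp (-(1 / 4) - C) ≤ (vol Set.univ).toReal) ∧
      (0 < (∫ x, R x ∂vol) / (vol Set.univ).toReal →
        Real.exp (-(1 / 4) - C) *
            ((∫ x, R x ∂vol) / (vol Set.univ).toReal) ^ (-(n : ℝ) / 2) ≤
          (vol Set.univ).toReal) := by
  have hc : ((vol Set.univ).toReal ^ (-(1 : ℝ) / 2)) ^ 2 = (vol.real Set.univ)⁻¹ :=
    rpow_neg_half_sq hvol.le
  have hlog : ∀ σ : ℝ, 0 < σ → -log (vol.real Set.univ) ≤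
      σ / 4 * ((∫ x, R x ∂vol) / vol.real Set.univ) - n / 2 * log σ + C := by
    intro σ hσ
    have h := hLSI σ hσ _ hconst (integral_sq_const_of_sq_eq_inv vol hvol hc)
    simpa only [hgradconst, zero_pow two_ne_zero, mul_zero, zero_add,
      integral_sq_mul_log_sq_const_of_sq_eq_inv vol hvol hc,
      integral_mul_sq_const_of_sq_eq_inv vol R hc] using h
  refine ⟨exp_neg_quarter_sub_le_of_nonpos hvol hlog, fun hr => ?_⟩
  rw [neg_div]
  exact exp_neg_quarter_sub_mul_rpow_neg_le_of_pos hvol hlog hr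

/-- Volume lower bound from a uniform logarithmic Sobolev inequality on a compact
Riemannian manifold of dimension `n ≥ 3` (modeled abstractly by a finite measure
`vol`, a `W^{1,2}` class `W12` containing the constants, a gradient-norm map `grad`
vanishing on constants, and the scalar curvature `R`):  `vol(M) ≥ e^{-1/4 - C}` if the
average scalar curvature `R̂` is nonpositive, and `vol(M) ≥ e^{-1/4 - C} R̂^{-n/2}` if
`R̂ > 0`. -/
theorem volume_bound_of_LSI
    {M : Type*} [MeasurableSpace M] (vol : Measure M) [IsFiniteMeasure vol]
    (n : ℕ) (hn : 3 ≤ n)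
    (W12 : Set (M → ℝ)) (grad : (M → ℝ) → (M → ℝ)) (R : M → ℝ)
    (hvol : 0 < (vol Set.univ).toReal) (hR : Integrable R vol)
    (C : ℝ) (hC : 0 < C)
    (hLSI : ∀ σ : ℝ, 0 < σ → ∀ u ∈ W12, (∫ x, (u x) ^ 2 ∂vol) = 1 →
      (∫ x, (u x) ^ 2 * Real.log ((u x) ^ 2) ∂vol) ≤
        σ / 4 * (∫ x, (4 * (grad u x) ^ 2 + R x * (u x) ^ 2) ∂vol) -
          n / 2 * Real.log σ + C)
    -- the constant function `vol(M)^{-1/2}` is an admissible test function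
    (hconst : (fun _ : M => (vol Set.univ).toReal ^ (-(1 : ℝ) / 2)) ∈ W12)
    (hgradconst : ∀ x, grad (fun _ : M => (vol Set.univ).toReal ^ (-(1 : ℝ) / 2)) x = 0) :
    ((∫ x, R x ∂vol) / (vol Set.univ).toReal ≤ 0 →
        Real.exp (-(1 / 4) - C) ≤ (vol Set.univ).toReal) ∧
      (0 < (∫ x, R x ∂vol) / (vol Set.univ).toReal →
        Real.exp (-(1 / 4) - C) *
            ((∫ x, R x ∂vol) / (vol Set.univ).toReal) ^ (-(n : ℝ) / 2) ≤
          (vol Set.univ).toReal) :=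
  volume_bound_of_LSI_general vol n W12 grad R hvol C hLSI hconst hgradconst
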